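/- For every multi-index α ∈ ℕ^D, the higher-order derivatives of the PQC cost function are uniformly bounded by the operator norm of the observable: sup_{θ ∈ ℝ^D} |D^α C(θ)| ≤ ‖H‖. -/

import Mathlib

/-!
Each gate is `exp (-i t V / 2) = cos (t / 2) - i sin (t / 2) V` because `V² = 1`, so the cost is
quadratic in `cos (θₖ / 2)`, `sin (θₖ / 2)`, i.e. of the form `c + a cos θₖ + b sin θₖ` in each
variable separately. For such functions the parameter-shift rule
`∂ₖ C θ = (C (θ + π/2 eₖ) - C (θ - π/2 eₖ)) / 2` holds, and shifts and half-differences preserve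
both this trigonometric form and the bound `|C| ≤ ‖H‖`, which holds because `U θ e₀` is a unit
vector. Induction on the number of derivatives concludes.
-/

open Matrix Real

/-- The partial derivative `∂_{θ_k} f`. -/
noncomputable def partialDeriv {D : ℕ} (k : Fin D) (f : (Fin D → ℝ) → ℝ) :
    (Fin D → ℝ) → ℝ :=
  fun θ => fderiv ℝ f θ (Pi.single k 1)

/-- The higher-order partial derivative `D^α = ∂_{θ_1}^{α_1} ⋯ ∂_{θ_D}^{α_D}`
associated with a multi-index `α ∈ ℕ^D`. -/
noncomputable def multiDeriv {D : ℕ} (α : Fin D → ℕ) (f : (Fin D → ℝ) → ℝ) :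
    (Fin D → ℝ) → ℝ :=
  ((List.finRange D).flatMap (fun k => List.replicate (α k) k)).foldr partialDeriv f

open Function

section SeparatelyTrig

variable {ι : Type*} [DecidableEq ι]

lemma update_self_add_eq_add_single (θ : ι → ℝ) (k : ι) (c : ℝ) :
    update θ k (θ k + c) = θ + Pi.single k c := by
  ext j
  rcases eq_or_ne j k with rfl | hj <;> simp [*]

lemma update_add_eq_update_add (θ v : ι → ℝ) (k : ι) (t : ℝ) :
    update θ k t + v = update (θ + v) k (t + v k) := by
  ext j
  rcases eq_or_ne j k with rfl | hj <;> simp [*]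

def SeparatelyTrig (f : (ι → ℝ) → ℝ) : Prop :=
  ∀ (k : ι) (θ : ι → ℝ), ∃ a b c : ℝ, ∀ t, f (update θ k t) = c + a * cos t + b * sin t

structure BoundedSeparatelyTrig (B : ℝ) (f : (ι → ℝ) → ℝ) : Prop where
  abs_le : ∀ θ, |f θ| ≤ B
  differentiable : Differentiable ℝ f
  separatelyTrig : SeparatelyTrig f

namespace BoundedSeparatelyTrig

variable [Fintype ι] {B : ℝ} {f g : (ι → ℝ) → ℝ}

lemma comp_add_const (hf : BoundedSeparatelyTrig B f) (v : ι → ℝ) :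
    BoundedSeparatelyTrig B fun θ => f (θ + v) where
  abs_le θ := hf.abs_le _
  differentiable := hf.differentiable.comp (differentiable_id.add_const v)
  separatelyTrig k θ := by
    obtain ⟨a, b, c, h⟩ := hf.separatelyTrig k (θ + v)
    refine ⟨a * cos (v k) + b * sin (v k), b * cos (v k) - a * sin (v k), c, fun t => ?_⟩
    simp only [update_add_eq_update_add, h, cos_add, sin_add]
    ring

lemma sub_div_two (hf : BoundedSeparatelyTrig B f) (hg : BoundedSeparatelyTrig B g) :
    BoundedSeparatelyTrig B fun θ => (f θ - g θ) / 2 where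
  abs_le θ := by
    rw [abs_div, abs_two, div_le_iff₀ two_pos]
    linarith [abs_sub (f θ) (g θ), hf.abs_le θ, hg.abs_le θ]
  differentiable := by
    have := hf.differentiable
    have := hg.differentiable
    fun_prop
  separatelyTrig k θ := by
    obtain ⟨a, b, c, hf⟩ := hf.separatelyTrig k θ
    obtain ⟨a', b', c', hg⟩ := hg.separatelyTrig k θ
    exact ⟨(a - a') / 2, (b - b') / 2, (c - c') / 2, fun t => by simp only [hf, hg]; ring⟩

end BoundedSeparatelyTrig

end SeparatelyTrig

section ParameterShift

variable {D : ℕ}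

theorem partialDeriv_eq_of_separatelyTrig {f : (Fin D → ℝ) → ℝ} (hd : Differentiable ℝ f)
    (hf : SeparatelyTrig f) (k : Fin D) :
    partialDeriv k f = fun θ =>
      (f (θ + Pi.single k (π / 2)) - f (θ + Pi.single k (-(π / 2)))) / 2 := by
  funext θ
  obtain ⟨a, b, c, h⟩ := hf k θ
  have hslice : HasDerivAt (fun t => f (update θ k t)) (partialDeriv k f θ) (θ k) := by
    have := (hd (update θ k (θ k))).hasFDerivAt.comp_hasDerivAt (θ k) (hasDerivAt_update θ k (θ k))
    rwa [update_eq_self] at this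
  have htrig : HasDerivAt (fun t => c + a * cos t + b * sin t)
      (a * -sin (θ k) + b * cos (θ k)) (θ k) :=
    (((hasDerivAt_cos _).const_mul a).const_add c).add ((hasDerivAt_sin _).const_mul b)
  simp only [funext h] at hslice
  rw [hslice.unique htrig, ← update_self_add_eq_add_single, ← update_self_add_eq_add_single, h, h]
  simp only [cos_add, sin_add, cos_pi_div_two, sin_pi_div_two, cos_neg, sin_neg]
  ring

lemma BoundedSeparatelyTrig.partialDeriv {B : ℝ} {f : (Fin D → ℝ) → ℝ}
    (hf : BoundedSeparatelyTrig B f) (k : Fin D) : BoundedSeparatelyTrig B (partialDeriv k f) := by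
  rw [partialDeriv_eq_of_separatelyTrig hf.differentiable hf.separatelyTrig k]
  exact (hf.comp_add_const _).sub_div_two (hf.comp_add_const _)

lemma BoundedSeparatelyTrig.abs_multiDeriv_le {B : ℝ} {f : (Fin D → ℝ) → ℝ}
    (hf : BoundedSeparatelyTrig B f) (α : Fin D → ℕ) (θ : Fin D → ℝ) :
    |multiDeriv α f θ| ≤ B := by
  suffices ∀ l : List (Fin D), BoundedSeparatelyTrig B (l.foldr _root_.partialDeriv f) from
    (this _).abs_le θ
  intro l
  induction l with
  | nil => exact hf
  | cons k l ih => exact ih.partialDeriv k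

end ParameterShift

lemma List.exists_prod_map_update_eq {ι α M : Type*} [DecidableEq ι] [Monoid M] {l : List ι}
    (hl : l.Nodup) {k : ι} (hk : k ∈ l) (f : ι → α → M) (θ : ι → α) :
    ∃ L R : M, ∀ t, (l.map fun j => f j (update θ k t j)).prod = L * f k t * R := by
  induction l with
  | nil => simp at hk
  | cons a l ih =>
    obtain ⟨ha, hl⟩ := List.nodup_cons.1 hl
    by_cases hak : a = k
    · subst hak
      refine ⟨1, (l.map fun j => f j (θ j)).prod, fun t => ?_⟩
      have hrest : (l.map fun j => f j (update θ a t j)) = l.map fun j => f j (θ j) :=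
        List.map_congr_left fun j hj => by rw [update_of_ne (ne_of_mem_of_not_mem hj ha)]
      simp [hrest]
    · obtain ⟨L, R, h⟩ := ih hl ((List.mem_cons.1 hk).resolve_left (Ne.symm hak))
      exact ⟨f a (θ a) * L, R, fun t => by simp [update_of_ne hak, h, mul_assoc]⟩

lemma NormedSpace.exp_smul_of_mul_self_eq_one {A : Type*} [Ring A] [Algebra ℂ A]
    [TopologicalSpace A] [IsTopologicalRing A] [ContinuousSMul ℂ A] [T2Space A]
    {V : A} (hV : V * V = 1) (z : ℂ) :
    NormedSpace.exp (z • V) = Complex.cosh z • (1 : A) + Complex.sinh z • V := by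
  have hV2 (k : ℕ) : V ^ (2 * k) = 1 := by rw [pow_mul, sq, hV, one_pow]
  rw [NormedSpace.exp_eq_tsum ℂ]
  refine HasSum.tsum_eq <| HasSum.even_add_odd ?_ ?_
  · convert (Complex.hasSum_cosh z).smul_const (1 : A) using 2 with k
    rw [smul_pow, hV2, smul_smul, inv_mul_eq_div]
  · convert (Complex.hasSum_sinh z).smul_const V using 2 with k
    rw [smul_pow, pow_succ V, hV2, one_mul, smul_smul, inv_mul_eq_div]

section Circuit

variable {m : Type*} [Fintype m] [DecidableEq m]

noncomputable def rotationGate (V : Matrix m m ℂ) (t : ℝ) : Matrix m m ℂ :=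
  NormedSpace.exp ((-Complex.I * ((t : ℂ) / 2)) • V)

lemma rotationGate_eq {V : Matrix m m ℂ} (hV : V * V = 1) (t : ℝ) :
    rotationGate V t = (cos (t / 2) : ℂ) • 1 + (-Complex.I * sin (t / 2)) • V := by
  have harg : -Complex.I * ((t : ℂ) / 2) = -(((t / 2 : ℝ) : ℂ) * Complex.I) := by push_cast; ring
  rw [rotationGate, NormedSpace.exp_smul_of_mul_self_eq_one hV, harg, Complex.cosh_neg,
    Complex.sinh_neg, Complex.cosh_mul_I, Complex.sinh_mul_I, Complex.ofReal_cos, Complex.ofReal_sin]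
  ring_nf

lemma rotationGate_mem_unitary {V : Matrix m m ℂ} (hV : Vᴴ = V) (t : ℝ) :
    rotationGate V t ∈ unitary (Matrix m m ℂ) := by
  set X := (-Complex.I * ((t : ℂ) / 2)) • V
  have hX : Xᴴ = -X := by
    simp [X, conjTranspose_smul, hV, Complex.conj_ofReal]
  have hcomm : Commute (-X) X := (Commute.refl X).neg_left
  rw [Unitary.mem_iff, star_eq_conjTranspose, rotationGate, ← exp_conjTranspose, hX,
    ← exp_add_of_commute _ _ hcomm, ← exp_add_of_commute _ _ hcomm.symm, neg_add_cancel,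
    add_neg_cancel, NormedSpace.exp_zero]
  exact ⟨rfl, rfl⟩

lemma exists_dotProduct_rotationGate_eq_trig {V : Matrix m m ℂ} (hV : V * V = 1)
    (H L R : Matrix m m ℂ) (v : m → ℂ) : ∃ a b c : ℂ, ∀ t : ℝ,
      star ((L * rotationGate V t * R) *ᵥ v) ⬝ᵥ (H *ᵥ ((L * rotationGate V t * R) *ᵥ v)) =
        c + a * cos t + b * sin t := by
  set u := (L * R) *ᵥ v
  set w := (L * V * R) *ᵥ v
  have hψ (t : ℝ) : (L * rotationGate V t * R) *ᵥ v =
      (cos (t / 2) : ℂ) • u + (-Complex.I * sin (t / 2)) • w := by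
    simp only [u, w, rotationGate_eq hV, Matrix.mul_add, Matrix.add_mul, Matrix.mul_smul,
      Matrix.smul_mul, Matrix.mul_one, add_mulVec, smul_mulVec]
  refine ⟨(star u ⬝ᵥ (H *ᵥ u) - star w ⬝ᵥ (H *ᵥ w)) / 2,
    Complex.I * (star w ⬝ᵥ (H *ᵥ u) - star u ⬝ᵥ (H *ᵥ w)) / 2,
    (star u ⬝ᵥ (H *ᵥ u) + star w ⬝ᵥ (H *ᵥ w)) / 2, fun t => ?_⟩
  have hcos : (cos t : ℂ) = cos (t / 2) ^ 2 - sin (t / 2) ^ 2 := by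
    exact_mod_cast (mul_div_cancel₀ t two_ne_zero) ▸ cos_two_mul' (t / 2)
  have hsin : (sin t : ℂ) = 2 * sin (t / 2) * cos (t / 2) := by
    exact_mod_cast (mul_div_cancel₀ t two_ne_zero) ▸ sin_two_mul (t / 2)
  have hpyth : (cos (t / 2) : ℂ) ^ 2 + sin (t / 2) ^ 2 = 1 := by
    exact_mod_cast cos_sq_add_sin_sq (t / 2)
  simp only [hψ, star_add, star_smul, add_dotProduct, smul_dotProduct, dotProduct_add,
    dotProduct_smul, mulVec_add, mulVec_smul, smul_eq_mul, Complex.star_def, map_mul, map_neg,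
    Complex.conj_I, Complex.conj_ofReal, hcos, hsin]
  linear_combination (star u ⬝ᵥ (H *ᵥ u) + star w ⬝ᵥ (H *ᵥ w)) / 2 * hpyth
    - (sin (t / 2) : ℂ) ^ 2 * (star w ⬝ᵥ (H *ᵥ w)) * Complex.I_sq

lemma norm_dotProduct_mulVec_le (H : Matrix m m ℂ) (ψ : m → ℂ) :
    ‖star ψ ⬝ᵥ (H *ᵥ ψ)‖ ≤ ‖toEuclideanCLM (𝕜 := ℂ) H‖ * ‖WithLp.toLp 2 ψ‖ ^ 2 := by
  set x := WithLp.toLp 2 ψ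
  set T := toEuclideanCLM (𝕜 := ℂ) H
  have hinner : star ψ ⬝ᵥ (H *ᵥ ψ) = inner ℂ x (T x) := by
    rw [toEuclideanCLM_toLp, EuclideanSpace.inner_eq_star_dotProduct, dotProduct_comm]
  calc ‖star ψ ⬝ᵥ (H *ᵥ ψ)‖ = ‖inner ℂ x (T x)‖ := by rw [hinner]
    _ ≤ ‖x‖ * (‖T‖ * ‖x‖) := (norm_inner_le_norm _ _).trans (by gcongr; exact T.le_opNorm x)
    _ = ‖T‖ * ‖x‖ ^ 2 := by ring

lemma norm_toLp_mulVec_of_mem_unitary {U : Matrix m m ℂ} (hU : U ∈ unitary (Matrix m m ℂ))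
    (v : m → ℂ) : ‖WithLp.toLp 2 (U *ᵥ v)‖ = ‖WithLp.toLp 2 v‖ := by
  rw [← toEuclideanCLM_toLp]
  exact ContinuousLinearMap.norm_map_of_mem_unitary (Unitary.map_mem _ hU) _

variable {ι : Type*}

noncomputable def circuit (l : List ι) (V W : ι → Matrix m m ℂ) (θ : ι → ℝ) : Matrix m m ℂ :=
  (l.map fun k => rotationGate (V k) (θ k) * W k).prod

variable {l : List ι} {V W : ι → Matrix m m ℂ}

lemma circuit_mem_unitary (hV : ∀ k, (V k)ᴴ = V k) (hW : ∀ k, W k ∈ unitary (Matrix m m ℂ))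
    (θ : ι → ℝ) : circuit l V W θ ∈ unitary (Matrix m m ℂ) :=
  Submonoid.list_prod_mem _ <| by
    simpa using fun k _ => mul_mem (rotationGate_mem_unitary (hV k) (θ k)) (hW k)

lemma exists_circuit_update_eq [DecidableEq ι] (hl : l.Nodup) {k : ι} (hk : k ∈ l) (θ : ι → ℝ) :
    ∃ L R, ∀ t, circuit l V W (update θ k t) = L * rotationGate (V k) t * R := by
  obtain ⟨L, R, h⟩ := List.exists_prod_map_update_eq hl hk (fun j s => rotationGate (V j) s * W j) θ
  exact ⟨L, W k * R, fun t => by rw [circuit, h, mul_assoc L, mul_assoc L, mul_assoc]⟩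

lemma differentiable_circuit_apply [Fintype ι] (hV : ∀ k, V k * V k = 1) (i j : m) :
    Differentiable ℝ fun θ => circuit l V W θ i j := by
  induction l generalizing i j with
  | nil => simp [circuit]
  | cons a l ih =>
    simp only [circuit, List.map_cons, List.prod_cons, mul_apply] at ih ⊢
    refine Differentiable.fun_sum fun x _ => Differentiable.mul ?_ (ih x j)
    simp only [rotationGate_eq (hV a), Matrix.add_apply, Matrix.smul_apply, smul_eq_mul]
    fun_prop

section CircuitCost

variable {H : Matrix m m ℂ} {v : m → ℂ} {C : (ι → ℝ) → ℝ}
  (hC : ∀ θ, (C θ : ℂ) = star (circuit l V W θ *ᵥ v) ⬝ᵥ (H *ᵥ (circuit l V W θ *ᵥ v)))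
include hC

lemma abs_le_of_circuit (hV : ∀ k, (V k)ᴴ = V k) (hW : ∀ k, W k ∈ unitary (Matrix m m ℂ))
    (hv : ‖WithLp.toLp 2 v‖ = 1) (θ : ι → ℝ) : |C θ| ≤ ‖toEuclideanCLM (𝕜 := ℂ) H‖ := by
  have := norm_dotProduct_mulVec_le H (circuit l V W θ *ᵥ v)
  rwa [← hC, Complex.norm_real, Real.norm_eq_abs,
    norm_toLp_mulVec_of_mem_unitary (circuit_mem_unitary hV hW θ), hv, one_pow, mul_one] at this

lemma differentiable_of_circuit [Fintype ι] (hV : ∀ k, V k * V k = 1) : Differentiable ℝ C := by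
  have hre : C = fun θ => (star (circuit l V W θ *ᵥ v) ⬝ᵥ (H *ᵥ (circuit l V W θ *ᵥ v))).re := by
    funext θ
    rw [← hC, Complex.ofReal_re]
  have hentry := differentiable_circuit_apply (l := l) (W := W) hV
  rw [hre]
  simp only [dotProduct, mulVec, Pi.star_apply, Complex.star_def]
  fun_prop

lemma separatelyTrig_of_circuit [DecidableEq ι] (hl : l.Nodup) (hmem : ∀ k, k ∈ l)
    (hV : ∀ k, V k * V k = 1) : SeparatelyTrig C := by
  intro k θ
  obtain ⟨L, R, hLR⟩ := exists_circuit_update_eq (V := V) (W := W) hl (hmem k) θ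
  obtain ⟨a, b, c, htrig⟩ := exists_dotProduct_rotationGate_eq_trig (hV k) H L R v
  refine ⟨a.re, b.re, c.re, fun t => ?_⟩
  have := congrArg Complex.re ((hC _).trans (hLR t ▸ htrig t))
  simpa [Complex.cos_ofReal_re, Complex.sin_ofReal_re] using this

end CircuitCost

end Circuit

theorem stmt3_general (N D : ℕ)
    (W V : Fin D → Matrix (Fin (2 ^ N)) (Fin (2 ^ N)) ℂ)
    (hW : ∀ k, (W k)ᴴ * W k = 1 ∧ W k * (W k)ᴴ = 1)
    (hVherm : ∀ k, (V k)ᴴ = V k) (hVinv : ∀ k, V k * V k = 1)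
    (H : Matrix (Fin (2 ^ N)) (Fin (2 ^ N)) ℂ)
    (e₀ : Fin (2 ^ N) → ℂ) (he₀ : e₀ = fun i : Fin (2 ^ N) => if (i : ℕ) = 0 then (1 : ℂ) else 0)
    (U : (Fin D → ℝ) → Matrix (Fin (2 ^ N)) (Fin (2 ^ N)) ℂ)
    (hU : ∀ θ, U θ = ((List.finRange D).reverse.map
        (fun k => NormedSpace.exp ((-Complex.I * ((θ k : ℂ) / 2)) • V k) * W k)).prod)
    (C : (Fin D → ℝ) → ℝ)
    (hC : ∀ θ, (C θ : ℂ) = star (U θ *ᵥ e₀) ⬝ᵥ (H *ᵥ (U θ *ᵥ e₀)))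
    (α : Fin D → ℕ) (θ : Fin D → ℝ) :
    |multiDeriv α C θ| ≤ ‖Matrix.toEuclideanCLM (𝕜 := ℂ) H‖ := by
  obtain rfl : U = circuit (List.finRange D).reverse V W := funext hU
  have hWu (k : Fin D) : W k ∈ unitary (Matrix (Fin (2 ^ N)) (Fin (2 ^ N)) ℂ) := hW k
  have he₀ : ‖WithLp.toLp 2 e₀‖ = 1 := by
    have : e₀ = Pi.single ⟨0, Nat.two_pow_pos N⟩ 1 := by
      funext i
      simp only [he₀, Pi.single_apply, Fin.ext_iff]
    rw [this, PiLp.toLp_single, PiLp.norm_single, norm_one]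
  have hl := List.nodup_reverse.2 (List.nodup_finRange D)
  have hmem (k : Fin D) : k ∈ (List.finRange D).reverse := by simp
  exact BoundedSeparatelyTrig.abs_multiDeriv_le ⟨abs_le_of_circuit hC hVherm hWu he₀,
    differentiable_of_circuit hC hVinv, separatelyTrig_of_circuit hC hl hmem hVinv⟩ α θ

/-- For every multi-index `α ∈ ℕ^D`, the higher-order derivatives of the
PQC cost function are uniformly bounded by the operator norm of the observable `H`
(viewed as an operator on the Euclidean space `ℂ^{2^N}`):
`sup_{θ ∈ ℝ^D} |D^α C(θ)| ≤ ‖H‖`. -/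
theorem stmt3 (N D : ℕ) (hN : 1 ≤ N) (hD : 1 ≤ D)
    (W V : Fin D → Matrix (Fin (2 ^ N)) (Fin (2 ^ N)) ℂ)
    (hW : ∀ k, (W k)ᴴ * W k = 1 ∧ W k * (W k)ᴴ = 1)
    (hVherm : ∀ k, (V k)ᴴ = V k) (hVinv : ∀ k, V k * V k = 1)
    (H : Matrix (Fin (2 ^ N)) (Fin (2 ^ N)) ℂ) (hH : Hᴴ = H)
    (e₀ : Fin (2 ^ N) → ℂ) (he₀ : e₀ = fun i : Fin (2 ^ N) => if (i : ℕ) = 0 then (1 : ℂ) else 0)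
    (U : (Fin D → ℝ) → Matrix (Fin (2 ^ N)) (Fin (2 ^ N)) ℂ)
    (hU : ∀ θ, U θ = ((List.finRange D).reverse.map
        (fun k => NormedSpace.exp ((-Complex.I * ((θ k : ℂ) / 2)) • V k) * W k)).prod)
    (C : (Fin D → ℝ) → ℝ)
    (hC : ∀ θ, (C θ : ℂ) = star (U θ *ᵥ e₀) ⬝ᵥ (H *ᵥ (U θ *ᵥ e₀)))
    (α : Fin D → ℕ) (θ : Fin D → ℝ) :
    |multiDeriv α C θ| ≤ ‖Matrix.toEuclideanCLM (𝕜 := ℂ) H‖ :=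
  stmt3_general N D W V hW hVherm hVinv H e₀ he₀ U hU C hC α θ
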